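/- The dihedral Artin group DA_n = ⟨a, b ∣ [aba⋯]_n = [bab⋯]_n⟩ (alternating words of length n on each side) is isomorphic to the group G_{2,n} = ⟨x₁, x₂ ∣ Π(x₁,x₂;n) = Π(x₂,x₁;n)⟩, and also isomorphic to G_{n,2} = ⟨y₁,…,yₙ ∣ y₁y₂ = y₂y₃ = ⋯ = y_{n−1}yₙ = yₙy₁⟩. -/

import Mathlib

/-- The alternating word `[sts⋯]_k` of length `k` starting with `s`. -/
def altWord {α : Type*} (s t : FreeGroup α) (k : ℕ) : FreeGroup α :=
  ((List.range k).map (fun j => if j % 2 = 0 then s else t)).prod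

/-- Relator of the dihedral Artin group `DA_n = ⟨a,b ∣ [aba⋯]_n = [bab⋯]_n⟩`. -/
def DARels (n : ℕ) : Set (FreeGroup (Fin 2)) :=
  { altWord (FreeGroup.of 0) (FreeGroup.of 1) n *
      (altWord (FreeGroup.of 1) (FreeGroup.of 0) n)⁻¹ }

/-- Relator of `G_{2,n} = ⟨x₁,x₂ ∣ Π(x₁,x₂;n) = Π(x₂,x₁;n)⟩`: the alternating-cyclic
products of length `n`. -/
def G2nRels (n : ℕ) : Set (FreeGroup (Fin 2)) :=
  { altWord (FreeGroup.of 0) (FreeGroup.of 1) n *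
      (altWord (FreeGroup.of 1) (FreeGroup.of 0) n)⁻¹ }

/-- Relators of `G_{n,2} = ⟨y₁,…,yₙ ∣ y₁y₂ = y₂y₃ = ⋯ = yₙy₁⟩` (indices cyclic). -/
def Gn2Rels (n : ℕ) [NeZero n] : Set (FreeGroup (Fin n)) :=
  {r | ∃ i : Fin n, r = FreeGroup.of i * FreeGroup.of (i + 1) *
    (FreeGroup.of (0 : Fin n) * FreeGroup.of (1 : Fin n))⁻¹}

/-!
In `G_{n,2}` put `c = y₁y₂`; the relations say exactly that `y_{k+1} = y_k⁻¹ c` with indices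
mod `n`. In any group, the sequence `z₀ = a`, `z_{k+1} = z_k⁻¹ (ab)` satisfies
`z_{k+2} = (ab)⁻¹ z_k (ab)`, so `z_{2m} = (ab)⁻ᵐ a (ab)ᵐ` and `z_{2m+1} = (ab)⁻ᵐ b (ab)ᵐ`;
comparing with `[aba⋯]_n = (ab)^{⌊n/2⌋} a^{n mod 2}` shows that the braid relation of length `n`
holds iff `z_n = a`, i.e. iff `z` is `n`-periodic. Hence `a ↦ y₁`, `b ↦ y₂` and `y_{k+1} ↦ z_k`
are mutually inverse homomorphisms between `DA_n` and `G_{n,2}`. The presentation of `G_{2,n}`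
is literally that of `DA_n`.
-/

section Group

variable {G H : Type*} [Group G] [Group H]

def alternatingProd (s t : G) (k : ℕ) : G :=
  ((List.range k).map (fun j => if j % 2 = 0 then s else t)).prod

theorem altWord_eq_alternatingProd {α : Type*} (s t : FreeGroup α) (k : ℕ) :
    altWord s t k = alternatingProd s t k :=
  rfl

theorem alternatingProd_succ (s t : G) (k : ℕ) :
    alternatingProd s t (k + 1) = alternatingProd s t k * if k % 2 = 0 then s else t := by
  simp [alternatingProd, List.range_succ]

theorem map_alternatingProd (f : G →* H) (s t : G) (k : ℕ) :
    f (alternatingProd s t k) = alternatingProd (f s) (f t) k := by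
  simp only [alternatingProd, map_list_prod, List.map_map]
  exact congrArg _ (List.map_congr_left fun j _ => apply_ite f _ _ _)

theorem alternatingProd_two_mul (s t : G) (m : ℕ) :
    alternatingProd s t (2 * m) = (s * t) ^ m := by
  induction m with
  | zero => simp [alternatingProd]
  | succ m ih =>
    rw [Nat.mul_succ, alternatingProd_succ, alternatingProd_succ, ih]
    simp [Nat.add_mod, pow_succ, mul_assoc]

theorem alternatingProd_two_mul_add_one (s t : G) (m : ℕ) :
    alternatingProd s t (2 * m + 1) = (s * t) ^ m * s := by
  simp [alternatingProd_succ, alternatingProd_two_mul]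

def zigzag (x c : G) : ℕ → G
  | 0 => x
  | k + 1 => (zigzag x c k)⁻¹ * c

@[simp]
theorem zigzag_zero (x c : G) : zigzag x c 0 = x :=
  rfl

theorem zigzag_succ (x c : G) (k : ℕ) : zigzag x c (k + 1) = (zigzag x c k)⁻¹ * c :=
  rfl

theorem zigzag_mul_zigzag_succ (x c : G) (k : ℕ) : zigzag x c k * zigzag x c (k + 1) = c := by
  rw [zigzag_succ, mul_inv_cancel_left]

theorem zigzag_add_two (x c : G) (k : ℕ) : zigzag x c (k + 2) = c⁻¹ * zigzag x c k * c := by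
  rw [zigzag_succ, zigzag_succ]
  group

theorem zigzag_two_mul_add (x c : G) (k m : ℕ) :
    zigzag x c (2 * m + k) = (c ^ m)⁻¹ * zigzag x c k * c ^ m := by
  induction m with
  | zero => simp
  | succ m ih =>
    rw [show 2 * (m + 1) + k = 2 * m + k + 2 by ring, zigzag_add_two, ih, pow_succ]
    group

theorem map_zigzag (f : G →* H) (x c : G) (k : ℕ) :
    f (zigzag x c k) = zigzag (f x) (f c) k := by
  induction k with
  | zero => rfl
  | succ k ih => rw [zigzag_succ, zigzag_succ, map_mul, map_inv, ih]

theorem zigzag_add_of_eq {x c : G} {n : ℕ} (h : zigzag x c n = x) (k : ℕ) :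
    zigzag x c (k + n) = zigzag x c k := by
  induction k with
  | zero => simpa using h
  | succ k ih => rw [Nat.add_right_comm, zigzag_succ, ih, zigzag_succ]

theorem zigzag_add_mul_of_eq {x c : G} {n : ℕ} (h : zigzag x c n = x) (k q : ℕ) :
    zigzag x c (k + n * q) = zigzag x c k := by
  induction q with
  | zero => rfl
  | succ q ih => rw [Nat.mul_succ, ← Nat.add_assoc, zigzag_add_of_eq h, ih]

theorem zigzag_mod_of_eq {x c : G} {n : ℕ} (h : zigzag x c n = x) (k : ℕ) :
    zigzag x c (k % n) = zigzag x c k := by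
  rw [← zigzag_add_mul_of_eq h (k % n) (k / n), Nat.mod_add_div]

theorem zigzag_mul_zigzag_mod_succ {x c : G} {n : ℕ} (h : zigzag x c n = x) (k : ℕ) :
    zigzag x c k * zigzag x c ((k + 1) % n) = c := by
  rw [zigzag_mod_of_eq h, zigzag_mul_zigzag_succ]

theorem alternatingProd_eq_swap_iff (a b : G) (n : ℕ) :
    alternatingProd a b n = alternatingProd b a n ↔ zigzag a (a * b) n = a := by
  obtain ⟨c, rfl⟩ : ∃ c, b = a⁻¹ * c := ⟨a * b, by group⟩
  have hconj (m : ℕ) : (a⁻¹ * c * a) ^ m = a⁻¹ * c ^ m * a := by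
    simpa only [inv_inv] using conj_pow (a := a⁻¹) (b := c) (i := m)
  rw [mul_inv_cancel_left]
  obtain ⟨m, rfl | rfl⟩ := Nat.even_or_odd' n
  · have hz : zigzag a c (2 * m) = (c ^ m)⁻¹ * a * c ^ m := zigzag_two_mul_add a c 0 m
    rw [alternatingProd_two_mul, alternatingProd_two_mul, mul_inv_cancel_left, hz, hconj,
      mul_assoc, eq_inv_mul_iff_mul_eq, mul_assoc, inv_mul_eq_iff_eq_mul, eq_comm]
  · have hz : zigzag a c (2 * m + 1) = (c ^ m)⁻¹ * (a⁻¹ * c) * c ^ m :=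
      zigzag_two_mul_add a c 1 m
    rw [alternatingProd_two_mul_add_one, alternatingProd_two_mul_add_one, mul_inv_cancel_left,
      hz, hconj]
    simp only [mul_assoc, mul_inv_cancel_left]
    rw [eq_inv_mul_iff_mul_eq, inv_mul_eq_iff_eq_mul, inv_mul_eq_iff_eq_mul, pow_mul_comm']
    exact eq_comm

end Group

section Presentations

open Fin.NatCast

theorem DARels.zigzag_eq_of_zero (n : ℕ) :
    zigzag (PresentedGroup.of 0 : PresentedGroup (DARels n))
      (PresentedGroup.of 0 * PresentedGroup.of 1) n = PresentedGroup.of 0 := by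
  rw [← alternatingProd_eq_swap_iff]
  have h := PresentedGroup.mk_eq_mk_of_mul_inv_mem (rels := DARels n) rfl
  rwa [altWord_eq_alternatingProd, altWord_eq_alternatingProd, map_alternatingProd,
    map_alternatingProd] at h

variable (n : ℕ) [NeZero n]

theorem Gn2Rels.of_mul_of_add_one (i : Fin n) :
    (PresentedGroup.of i : PresentedGroup (Gn2Rels n)) * PresentedGroup.of (i + 1) =
      PresentedGroup.of 0 * PresentedGroup.of 1 := by
  have h := PresentedGroup.mk_eq_mk_of_mul_inv_mem (rels := Gn2Rels n) ⟨i, rfl⟩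
  rwa [map_mul, map_mul] at h

theorem Gn2Rels.zigzag_eq_of (k : ℕ) :
    zigzag (PresentedGroup.of 0 : PresentedGroup (Gn2Rels n))
      (PresentedGroup.of 0 * PresentedGroup.of 1) k = PresentedGroup.of (k : Fin n) := by
  induction k with
  | zero => simp
  | succ k ih =>
    rw [zigzag_succ, ih, ← Gn2Rels.of_mul_of_add_one, inv_mul_cancel_left, Nat.cast_succ]

noncomputable def dihedralArtinToGn2 : PresentedGroup (DARels n) →* PresentedGroup (Gn2Rels n) :=
  PresentedGroup.toGroup (f := ![PresentedGroup.of 0, PresentedGroup.of 1]) <| by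
    rintro r rfl
    rw [map_mul, map_inv, mul_inv_eq_one]
    simp only [altWord_eq_alternatingProd, map_alternatingProd, FreeGroup.lift_apply_of]
    refine (alternatingProd_eq_swap_iff _ _ n).2 ?_
    simpa using Gn2Rels.zigzag_eq_of n n

noncomputable def gn2ToDihedralArtin : PresentedGroup (Gn2Rels n) →* PresentedGroup (DARels n) :=
  PresentedGroup.toGroup (f := fun i : Fin n =>
      zigzag (PresentedGroup.of 0) (PresentedGroup.of 0 * PresentedGroup.of 1) i) <| by
    rintro r ⟨i, rfl⟩
    have h := DARels.zigzag_eq_of_zero n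
    have hval : ((i + 1 : Fin n) : ℕ) = (i + 1) % n := by
      rw [Fin.val_add, Fin.val_one', Nat.add_mod_mod]
    rw [map_mul, map_inv, mul_inv_eq_one]
    simp only [map_mul, FreeGroup.lift_apply_of]
    rw [hval, show ((1 : Fin n) : ℕ) = (0 + 1) % n from Fin.val_one' n, Fin.val_zero,
      zigzag_mul_zigzag_mod_succ h, zigzag_mul_zigzag_mod_succ h]

@[simp]
theorem dihedralArtinToGn2_of (i : Fin 2) :
    dihedralArtinToGn2 n (.of i) = ![PresentedGroup.of 0, PresentedGroup.of 1] i :=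
  PresentedGroup.toGroup.of _

@[simp]
theorem gn2ToDihedralArtin_of (i : Fin n) :
    gn2ToDihedralArtin n (.of i) =
      zigzag (PresentedGroup.of 0) (PresentedGroup.of 0 * PresentedGroup.of 1) i :=
  PresentedGroup.toGroup.of _

theorem gn2ToDihedralArtin_comp_dihedralArtinToGn2 :
    (gn2ToDihedralArtin n).comp (dihedralArtinToGn2 n) = MonoidHom.id _ := by
  ext i
  fin_cases i
  · simp
  · simp [zigzag_mod_of_eq (DARels.zigzag_eq_of_zero n), zigzag_succ]

theorem dihedralArtinToGn2_comp_gn2ToDihedralArtin :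
    (dihedralArtinToGn2 n).comp (gn2ToDihedralArtin n) = MonoidHom.id _ := by
  ext i
  simp [map_zigzag, Gn2Rels.zigzag_eq_of]

noncomputable def dihedralArtinEquivGn2 : PresentedGroup (DARels n) ≃* PresentedGroup (Gn2Rels n) :=
  (dihedralArtinToGn2 n).toMulEquiv (gn2ToDihedralArtin n)
    (gn2ToDihedralArtin_comp_dihedralArtinToGn2 n) (dihedralArtinToGn2_comp_gn2ToDihedralArtin n)

end Presentations

theorem dihedral_artin_iso_G2n_and_Gn2_general (n : ℕ) [NeZero n] :
    Nonempty (PresentedGroup (DARels n) ≃* PresentedGroup (G2nRels n)) ∧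
    Nonempty (PresentedGroup (DARels n) ≃* PresentedGroup (Gn2Rels n)) :=
  ⟨⟨MulEquiv.refl _⟩, ⟨dihedralArtinEquivGn2 n⟩⟩

/-- For `n ≥ 2`, the dihedral Artin group `DA_n` is isomorphic to
`G_{2,n}` and to `G_{n,2}`. -/
theorem dihedral_artin_iso_G2n_and_Gn2 (n : ℕ) (hn : 2 ≤ n) [NeZero n] :
    Nonempty (PresentedGroup (DARels n) ≃* PresentedGroup (G2nRels n)) ∧
    Nonempty (PresentedGroup (DARels n) ≃* PresentedGroup (Gn2Rels n)) :=
  dihedral_artin_iso_G2n_and_Gn2_general n
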